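/- arXiv:1901.03007 — 2 statements merged into one kernel-verified Lean document; each statement's English description precedes it below -/
import Mathlib

section
/- Suppose K : (0,∞) → ℝ is locally integrable, eventually decreasing, positive, K(t) → 0 at infinity, t·K(t) → C₁ > 0 as t → ∞, and K_cos(ω) > 0 for all ω > 0. Then the spectral density r̂(ω) = (1/(2π)) · 2β K_cos(ω) / ([β K_cos(ω)]² + [mω − β K_sin(ω)]²), with m, β > 0, is continuous on (0,∞), tends to 0 as ω → 0⁺ and as ω → ∞, and is integrable on (0,∞). -/
/-!
Since `K` is eventually antitone and nonnegative, Bonnet's form of the second mean value theorem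
bounds the tail `∫_T^∞ K(t) cos(ωt) dt` (and its sine analogue) by `(2/ω) K(T)`. Hence the
truncated transforms converge uniformly on `ω ≥ ω₀ > 0`, so `K_cos` and `K_sin` are continuous,
and they are bounded for `ω ≥ 1`, so `r̂(ω) = O(ω⁻²)` at infinity. Near `0`, `t K(t) ≥ C₁/2`
together with `cos ≥ 1/2` on `[0, π/3]` gives `K_cos(ω) ≥ (C₁/4) log(1/ω) - O(1) → ∞`, and then
`0 ≤ r̂ ≤ 1/(π β K_cos) → 0`. Continuity, the limit at `0⁺` and the decay `ω⁻²` give integrability.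
-/

open MeasureTheory Filter Set Real

open Topology

section SecondMeanValue

variable {f g h : ℝ → ℝ} {M a b : ℝ}

lemma Antitone.exists_ae_eq_Ioc_inter_superlevel (hh : Antitone h) (a b s : ℝ) :
    ∃ c, a ≤ c ∧ (Ioc a b ∩ {t | s < h t} : Set ℝ) =ᵐ[volume] Ioc a c := by
  set E := Ioc a b ∩ {t | s < h t}
  rcases E.eq_empty_or_nonempty with hE | ⟨t₀, ht₀⟩
  · exact ⟨a, le_rfl, by rw [hE, Ioc_self]; rfl⟩
  have hbdd : BddAbove E := ⟨b, fun t ht => ht.1.2⟩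
  refine ⟨sSup E, ht₀.1.1.le.trans (le_csSup hbdd ht₀), ae_eq_set.2 ⟨?_, ?_⟩⟩
  · have hsub : E ⊆ Ioc a (sSup E) := fun t ht => ⟨ht.1.1, le_csSup hbdd ht⟩
    rw [sdiff_eq_empty.2 hsub, measure_empty]
  · refine measure_mono_null (fun t ht => ?_) (measure_singleton (sSup E))
    by_contra hne
    obtain ⟨t', ht', htt'⟩ := exists_lt_of_lt_csSup ⟨t₀, ht₀⟩ (lt_of_le_of_ne ht.1.2 hne)
    exact ht.2 ⟨⟨ht.1.1, htt'.le.trans ht'.1.2⟩, ht'.2.trans_le (hh htt'.le)⟩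

/-- Layer-cake representation: `h t = ∫ s in (0, h a), 1[s < h t]` for `t ∈ (a, b]`. -/
lemma Antitone.intervalIntegral_mul_eq_setIntegral_superlevel (hh : Antitone h)
    (hf : Continuous f) (hab : a ≤ b) (hb : h b = 0) :
    ∫ t in a..b, h t * f t = ∫ s in Ioo 0 (h a), ∫ t in Ioc a b ∩ {t | s < h t}, f t := by
  set F : ℝ → ℝ → ℝ := fun s t => {t | s < h t}.indicator f t
  have hFmeas : Measurable (Function.uncurry F) :=
    (hf.measurable.comp measurable_snd).ite
      (measurableSet_lt measurable_fst (hh.measurable.comp measurable_snd)) measurable_const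
  have hFint : Integrable (Function.uncurry F)
      ((volume.restrict (Ioo 0 (h a))).prod (volume.restrict (Ioc a b))) :=
    (((hf.integrableOn_Icc (a := a) (b := b)).mono_set Ioc_subset_Icc_self).norm.comp_snd
      _).mono' hFmeas.aestronglyMeasurable (ae_of_all _ fun p => norm_indicator_le_norm_self _ _)
  have hinner : ∀ t ∈ Ioc a b, ∫ s in Ioo 0 (h a), F s t = h t * f t := by
    intro t ht
    have hF : (fun s => F s t) = (Iio (h t)).indicator fun _ => f t := by
      ext s; simp [F, indicator_apply]
    have hIoo : Iio (h t) ∩ Ioo 0 (h a) = Ioo 0 (h t) := by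
      ext s
      simp only [mem_inter_iff, mem_Iio, mem_Ioo]
      constructor
      · rintro ⟨h1, h2, _⟩; exact ⟨h2, h1⟩
      · rintro ⟨h1, h2⟩; exact ⟨h2, h1, h2.trans_le (hh ht.1.le)⟩
    rw [hF, integral_indicator_const _ measurableSet_Iio, measureReal_restrict_apply
      measurableSet_Iio, hIoo, Real.volume_real_Ioo_of_le (hb ▸ hh ht.2), sub_zero, smul_eq_mul]
  calc ∫ t in a..b, h t * f t = ∫ t in Ioc a b, ∫ s in Ioo 0 (h a), F s t := by
        rw [intervalIntegral.integral_of_le hab]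
        exact setIntegral_congr_fun measurableSet_Ioc fun t ht => (hinner t ht).symm
    _ = ∫ s in Ioo 0 (h a), ∫ t in Ioc a b, F s t := (integral_integral_swap hFint).symm
    _ = ∫ s in Ioo 0 (h a), ∫ t in Ioc a b ∩ {t | s < h t}, f t := by
        congr 1; ext s
        exact setIntegral_indicator (measurableSet_lt measurable_const hh.measurable)

lemma Antitone.abs_intervalIntegral_mul_le_of_eq_zero (hh : Antitone h) (hf : Continuous f)
    (hM : ∀ x y, |∫ t in x..y, f t| ≤ M) (hab : a ≤ b) (hb : h b = 0) :
    |∫ t in a..b, h t * f t| ≤ M * h a := by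
  have hha : 0 ≤ h a := hb ▸ hh hab
  rw [hh.intervalIntegral_mul_eq_setIntegral_superlevel hf hab hb, ← Real.norm_eq_abs]
  refine (norm_setIntegral_le_of_norm_le_const measure_Ioo_lt_top fun s _ => ?_).trans_eq
    (by rw [Real.volume_real_Ioo_of_le hha, sub_zero])
  obtain ⟨c, hac, hc⟩ := hh.exists_ae_eq_Ioc_inter_superlevel a b s
  rw [setIntegral_congr_set hc, ← intervalIntegral.integral_of_le hac, Real.norm_eq_abs]
  exact hM a c

lemma Antitone.abs_intervalIntegral_mul_le (hg : Antitone g) (hf : Continuous f)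
    (hM : ∀ x y, |∫ t in x..y, f t| ≤ M) (hab : a ≤ b) (hgb : 0 ≤ g b) :
    |∫ t in a..b, g t * f t| ≤ M * g a := by
  have hshift : Antitone fun t => g t - g b := fun x y hxy => sub_le_sub_right (hg hxy) _
  have hsplit : ∫ t in a..b, g t * f t
      = (∫ t in a..b, (g t - g b) * f t) + g b * ∫ t in a..b, f t := by
    simp_rw [sub_mul]
    rw [intervalIntegral.integral_sub (((hg.antitoneOn _).intervalIntegrable).mul_continuousOn
      hf.continuousOn) ((hf.intervalIntegrable a b).const_mul _),
      intervalIntegral.integral_const_mul, sub_add_cancel]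
  calc |∫ t in a..b, g t * f t|
      ≤ |∫ t in a..b, (g t - g b) * f t| + |g b * ∫ t in a..b, f t| := hsplit ▸ abs_add_le _ _
    _ ≤ M * (g a - g b) + g b * M := by
        gcongr
        · exact hshift.abs_intervalIntegral_mul_le_of_eq_zero hf hM hab (sub_self _)
        · rw [abs_mul, abs_of_nonneg hgb]
          exact mul_le_mul_of_nonneg_left (hM a b) hgb
    _ = M * g a := by ring

/-- The second mean value theorem, in the form of Bonnet's bound. -/
lemma AntitoneOn.abs_intervalIntegral_mul_le (hg : AntitoneOn g (Icc a b)) (hf : Continuous f)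
    (hM : ∀ x y, |∫ t in x..y, f t| ≤ M) (hab : a ≤ b) (hgb : 0 ≤ g b) :
    |∫ t in a..b, g t * f t| ≤ M * g a := by
  set g' : ℝ → ℝ := fun t => g (projIcc a b hab t)
  have hg' : Antitone g' := fun x y hxy =>
    hg (projIcc a b hab x).2 (projIcc a b hab y).2 (monotone_projIcc hab hxy)
  have heq : ∀ t ∈ Icc a b, g' t = g t := fun t ht => by simp [g', projIcc_of_mem hab ht]
  have hint : ∫ t in a..b, g t * f t = ∫ t in a..b, g' t * f t :=
    intervalIntegral.integral_congr fun t ht => by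
      rw [uIcc_of_le hab] at ht
      simp only [heq t ht]
  rw [hint, ← heq a (left_mem_Icc.2 hab)]
  exact hg'.abs_intervalIntegral_mul_le hf hM hab (by rwa [heq b (right_mem_Icc.2 hab)])

end SecondMeanValue

lemma IntervalIntegrable.trans_antitoneOn_Ici {K : ℝ → ℝ} {a A T : ℝ}
    (hK : IntervalIntegrable K volume a A) (hanti : AntitoneOn K (Ici A)) (hAT : A ≤ T) :
    IntervalIntegrable K volume a T :=
  hK.trans (hanti.mono (by rw [uIcc_of_le hAT]; exact Icc_subset_Ici_self)).intervalIntegrable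

lemma intervalIntegrable_of_integrableOn_Ioc_zero_one {K : ℝ → ℝ} {b : ℝ}
    (hK : IntegrableOn K (Ioc 0 1)) (hloc : LocallyIntegrableOn K (Ioi 0)) (hb : 0 ≤ b) :
    IntervalIntegrable K volume 0 b := by
  rw [intervalIntegrable_iff_integrableOn_Ioc_of_le hb]
  exact (hK.union (hloc.integrableOn_compact_subset (fun t ht => one_pos.trans_le ht.1)
    isCompact_Icc)).mono_set Ioc_subset_Ioc_union_Icc

lemma AntitoneOn.exists_antitoneOn_mul_mem_Icc {K : ℝ → ℝ} {A₀ C : ℝ}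
    (hanti : AntitoneOn K (Ici A₀)) (hC : 0 < C)
    (htK : Tendsto (fun t => t * K t) atTop (𝓝 C)) :
    ∃ A ≥ 1, AntitoneOn K (Ici A) ∧ (∀ t ≥ A, C / 2 ≤ t * K t) ∧ ∀ t ≥ A, t * K t ≤ 2 * C := by
  obtain ⟨A', hA'⟩ := eventually_atTop.1
    (htK.eventually (Icc_mem_nhds (half_lt_self hC) (by linarith : C < 2 * C)))
  exact ⟨max A' (max A₀ 1), le_max_of_le_right (le_max_right _ _),
    hanti.mono (Ici_subset_Ici.2 (le_max_of_le_right (le_max_left _ _))),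
    fun t ht => (hA' t (le_of_max_le_left ht)).1, fun t ht => (hA' t (le_of_max_le_left ht)).2⟩

lemma AntitoneOn.nonneg_of_tendsto_zero {K : ℝ → ℝ} {A t : ℝ} (hanti : AntitoneOn K (Ici A))
    (hK0 : Tendsto K atTop (𝓝 0)) (ht : A ≤ t) : 0 ≤ K t :=
  le_of_tendsto hK0 (eventually_atTop.2 ⟨t, fun _ hs => hanti ht (ht.trans hs) hs⟩)

section ImproperIntegral

variable {K f trig Kf : ℝ → ℝ} {A C M T L : ℝ}

lemma abs_sub_intervalIntegral_le_of_antitoneOn (hK : IntervalIntegrable K volume 0 T)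
    (hanti : AntitoneOn K (Ici T)) (hKnn : ∀ t ≥ T, 0 ≤ K t) (hf : Continuous f)
    (hM : ∀ x y, |∫ t in x..y, f t| ≤ M)
    (hL : Tendsto (fun b => ∫ t in 0..b, K t * f t) atTop (𝓝 L)) :
    |L - ∫ t in 0..T, K t * f t| ≤ M * K T := by
  refine le_of_tendsto ((hL.sub_const _).abs) ?_
  filter_upwards [eventually_ge_atTop T] with b hb
  rw [intervalIntegral.integral_interval_sub_left
    ((hK.trans_antitoneOn_Ici hanti hb).mul_continuousOn hf.continuousOn)
    (hK.mul_continuousOn hf.continuousOn)]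
  exact (hanti.mono Icc_subset_Ici_self).abs_intervalIntegral_mul_le hf hM hb (hKnn b hb)

lemma abs_intervalIntegral_comp_mul_left_le {ω : ℝ} (hω : 0 < ω)
    (hC : ∀ x y, |∫ t in x..y, f t| ≤ C) (x y : ℝ) :
    |∫ t in x..y, f (ω * t)| ≤ C / ω := by
  rw [intervalIntegral.integral_comp_mul_left f hω.ne', smul_eq_mul, abs_mul, abs_inv,
    abs_of_pos hω, inv_mul_eq_div]
  exact div_le_div_of_nonneg_right (hC _ _) hω.le

lemma abs_intervalIntegral_cos_le (x y : ℝ) : |∫ t in x..y, cos t| ≤ 2 := by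
  rw [integral_cos]
  linarith [abs_sub (sin y) (sin x), abs_sin_le_one y, abs_sin_le_one x]

lemma abs_intervalIntegral_sin_le (x y : ℝ) : |∫ t in x..y, sin t| ≤ 2 := by
  rw [integral_sin]
  linarith [abs_sub (cos x) (cos y), abs_cos_le_one y, abs_cos_le_one x]

lemma continuous_intervalIntegral_mul_comp_mul {a b : ℝ} (hK : IntervalIntegrable K volume a b)
    (htrig : Continuous trig) (hbdd : ∀ x, |trig x| ≤ 1) :
    Continuous fun ω => ∫ t in a..b, K t * trig (ω * t) := by
  refine intervalIntegral.continuous_of_dominated_interval (bound := fun t => |K t|)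
    (fun ω => ?_) (fun ω => ae_of_all _ fun t _ => ?_) hK.abs
    (ae_of_all _ fun t _ => continuous_const.mul (htrig.comp (continuous_mul_const t)))
  · exact (hK.mul_continuousOn (htrig.comp (continuous_const_mul ω)).continuousOn).def'.1
  · rw [Real.norm_eq_abs, abs_mul]
    exact mul_le_of_le_one_right (abs_nonneg _) (hbdd _)

lemma continuousOn_of_tendsto_intervalIntegral_mul_comp_mul
    (hK : IntervalIntegrable K volume 0 A) (hanti : AntitoneOn K (Ici A))
    (hK0 : Tendsto K atTop (𝓝 0)) (htrig : Continuous trig) (hbdd : ∀ x, |trig x| ≤ 1)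
    (hC : ∀ x y, |∫ t in x..y, trig t| ≤ C)
    (hKf : ∀ ω > 0, Tendsto (fun T => ∫ t in 0..T, K t * trig (ω * t)) atTop (𝓝 (Kf ω))) :
    ContinuousOn Kf (Ioi 0) := by
  intro ω₀ (hω₀ : 0 < ω₀)
  have hhalf : 0 < ω₀ / 2 := half_pos hω₀
  have hC0 : 0 ≤ C := (abs_nonneg _).trans (hC 0 0)
  have hsmall : ∀ ε > 0, ∀ᶠ T in atTop, C / (ω₀ / 2) * K T < ε := fun ε hε =>
    (hK0.const_mul _).eventually (gt_mem_nhds (by rwa [mul_zero]))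
  have hunif : TendstoUniformlyOn (fun T ω => ∫ t in 0..T, K t * trig (ω * t)) Kf atTop
      (Ioi (ω₀ / 2)) := by
    refine Metric.tendstoUniformlyOn_iff.2 fun ε hε => ?_
    filter_upwards [hsmall ε hε, eventually_ge_atTop A] with T hTε hAT ω (hω : ω₀ / 2 < ω)
    have hKT : 0 ≤ K T := hanti.nonneg_of_tendsto_zero hK0 hAT
    calc dist (Kf ω) (∫ t in 0..T, K t * trig (ω * t)) ≤ C / ω * K T :=
          abs_sub_intervalIntegral_le_of_antitoneOn (hK.trans_antitoneOn_Ici hanti hAT)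
            (hanti.mono (Ici_subset_Ici.2 hAT))
            (fun t ht => hanti.nonneg_of_tendsto_zero hK0 (hAT.trans ht))
            (htrig.comp (continuous_const_mul ω))
            (abs_intervalIntegral_comp_mul_left_le (hhalf.trans hω) hC) (hKf ω (hhalf.trans hω))
      _ ≤ C / (ω₀ / 2) * K T := by gcongr
      _ < ε := hTε
  have hcont : ContinuousOn Kf (Ioi (ω₀ / 2)) :=
    hunif.continuousOn ((eventually_ge_atTop A).mono fun T hAT =>
      (continuous_intervalIntegral_mul_comp_mul (hK.trans_antitoneOn_Ici hanti hAT) htrig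
        hbdd).continuousOn).frequently
  exact (hcont.continuousAt (Ioi_mem_nhds (half_lt_self hω₀))).continuousWithinAt

lemma exists_eventually_abs_le_of_tendsto_intervalIntegral_mul_comp_mul (hA : 0 ≤ A)
    (hK : IntervalIntegrable K volume 0 A) (hanti : AntitoneOn K (Ici A))
    (hKnn : ∀ t ≥ A, 0 ≤ K t) (htrig : Continuous trig) (hbdd : ∀ x, |trig x| ≤ 1)
    (hC : ∀ x y, |∫ t in x..y, trig t| ≤ C)
    (hKf : ∀ ω > 0, Tendsto (fun T => ∫ t in 0..T, K t * trig (ω * t)) atTop (𝓝 (Kf ω))) :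
    ∃ B, ∀ᶠ ω in atTop, |Kf ω| ≤ B := by
  have hC0 : 0 ≤ C := (abs_nonneg _).trans (hC 0 0)
  refine ⟨(∫ t in 0..A, |K t|) + C * K A, ?_⟩
  filter_upwards [eventually_ge_atTop 1] with ω hω
  have hω0 : 0 < ω := one_pos.trans_le hω
  have htail : |Kf ω - ∫ t in 0..A, K t * trig (ω * t)| ≤ C / ω * K A :=
    abs_sub_intervalIntegral_le_of_antitoneOn hK hanti hKnn (htrig.comp (continuous_const_mul ω))
      (abs_intervalIntegral_comp_mul_left_le hω0 hC) (hKf ω hω0)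
  have hhead : |∫ t in 0..A, K t * trig (ω * t)| ≤ ∫ t in 0..A, |K t| := by
    refine (intervalIntegral.abs_integral_le_integral_abs hA).trans
      (intervalIntegral.integral_mono_on hA
        (hK.mul_continuousOn (htrig.comp (continuous_const_mul ω)).continuousOn).abs hK.abs
        fun t _ => ?_)
    rw [abs_mul]
    exact mul_le_of_le_one_right (abs_nonneg _) (hbdd _)
  have hCω : C / ω * K A ≤ C * K A :=
    mul_le_mul_of_nonneg_right (div_le_self hC0 hω) (hKnn A le_rfl)
  linarith [abs_sub_abs_le_abs_sub (Kf ω) (∫ t in 0..A, K t * trig (ω * t))]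

end ImproperIntegral

section CosineTransform

variable {K Kf : ℝ → ℝ} {A S c c' ω : ℝ}

lemma half_intervalIntegral_le_intervalIntegral_mul_cos (hA : 0 < A) (hAS : A ≤ S)
    (hω : 0 ≤ ω) (hωS : ω * S ≤ π / 3) (hK : IntervalIntegrable K volume 0 S)
    (hKnn : ∀ t ∈ Ioi 0, 0 ≤ K t) :
    (∫ t in A..S, K t) / 2 ≤ ∫ t in 0..S, K t * cos (ω * t) := by
  have hcos : ∀ t ∈ Icc 0 S, 1 / 2 ≤ cos (ω * t) := fun t ht => by
    rw [← cos_pi_div_three]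
    exact cos_le_cos_of_nonneg_of_le_pi (mul_nonneg hω ht.1) (by linarith [pi_pos])
      (le_trans (by gcongr; exact ht.2) hωS)
  have hKcos : IntervalIntegrable (fun t => K t * cos (ω * t)) volume 0 S :=
    hK.mul_continuousOn (continuous_cos.comp (continuous_const_mul ω)).continuousOn
  have hAmem : A ∈ uIcc 0 S := mem_uIcc_of_le hA.le hAS
  have hhead : 0 ≤ ∫ t in 0..A, K t * cos (ω * t) := by
    rw [intervalIntegral.integral_of_le hA.le]
    exact setIntegral_nonneg measurableSet_Ioc fun t ht =>
      mul_nonneg (hKnn t ht.1) (by linarith [hcos t ⟨ht.1.le, ht.2.trans hAS⟩])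
  have htail : (∫ t in A..S, K t) / 2 ≤ ∫ t in A..S, K t * cos (ω * t) := by
    rw [← intervalIntegral.integral_div]
    refine intervalIntegral.integral_mono_on hAS
      ((hK.mono_set (uIcc_subset_uIcc_right hAmem)).div_const 2)
      (hKcos.mono_set (uIcc_subset_uIcc_right hAmem)) fun t ht => ?_
    nlinarith [hcos t ⟨hA.le.trans ht.1, ht.2⟩, hKnn t (hA.trans_le ht.1)]
  rw [← intervalIntegral.integral_add_adjacent_intervals
    (hKcos.mono_set (uIcc_subset_uIcc_left hAmem)) (hKcos.mono_set (uIcc_subset_uIcc_right hAmem))]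
  linarith

lemma mul_log_le_intervalIntegral (hA : 0 < A) (hAS : A ≤ S)
    (hK : IntervalIntegrable K volume A S) (hlow : ∀ t ≥ A, c ≤ t * K t) :
    c * log (S / A) ≤ ∫ t in A..S, K t := by
  have hinv : ContinuousOn (fun t => c * t⁻¹) (uIcc A S) :=
    continuousOn_const.mul (continuousOn_inv₀.mono fun t ht =>
      (hA.trans_le (by rw [uIcc_of_le hAS] at ht; exact ht.1)).ne')
  rw [← integral_inv_of_pos hA (hA.trans_le hAS), ← intervalIntegral.integral_const_mul]
  refine intervalIntegral.integral_mono_on hAS hinv.intervalIntegrable hK fun t ht => ?_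
  rw [← div_eq_mul_inv, div_le_iff₀' (hA.trans_le ht.1)]
  exact hlow t ht.1

/-- At frequency `ω` the cosine stays above `1/2` up to `S = π / (3ω)`, where the head of the
integral is at least `(c/2) log (S/A)`, while Bonnet's bound and `K S ≤ c' / S` keep the tail
bounded independently of `ω`. -/
lemma tendsto_nhdsGT_zero_atTop_of_tendsto_intervalIntegral_mul_cos (hA : 0 < A)
    (hK : IntervalIntegrable K volume 0 A) (hKnn : ∀ t ∈ Ioi 0, 0 ≤ K t)
    (hanti : AntitoneOn K (Ici A)) (hc : 0 < c) (hlow : ∀ t ≥ A, c ≤ t * K t)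
    (hup : ∀ t ≥ A, t * K t ≤ c')
    (hKf : ∀ ω > 0, Tendsto (fun T => ∫ t in 0..T, K t * cos (ω * t)) atTop (𝓝 (Kf ω))) :
    Tendsto Kf (𝓝[>] 0) atTop := by
  have hbound : ∀ ω ∈ Ioo 0 (π / (3 * A)),
      c / 2 * log (π / (3 * A) * ω⁻¹) - 6 * c' / π ≤ Kf ω := by
    rintro ω ⟨hω, hωA⟩
    set S := π / (3 * ω)
    have hAS : A ≤ S := by
      rw [lt_div_iff₀ (by positivity)] at hωA
      rw [le_div_iff₀ (by positivity)]
      linarith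
    have hS : 0 < S := hA.trans_le hAS
    have hωS : ω * S = π / 3 := by simp only [S]; field_simp
    have hKS : IntervalIntegrable K volume 0 S := hK.trans_antitoneOn_Ici hanti hAS
    have htail : |Kf ω - ∫ t in 0..S, K t * cos (ω * t)| ≤ 2 / ω * K S :=
      abs_sub_intervalIntegral_le_of_antitoneOn hKS (hanti.mono (Ici_subset_Ici.2 hAS))
        (fun t ht => hKnn t (hS.trans_le ht)) (continuous_cos.comp (continuous_const_mul ω))
        (abs_intervalIntegral_comp_mul_left_le hω abs_intervalIntegral_cos_le) (hKf ω hω)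
    have hKS' : 2 / ω * K S ≤ 6 * c' / π := by
      calc 2 / ω * K S = 2 / (ω * S) * (S * K S) := by field_simp
        _ ≤ 2 / (ω * S) * c' := by gcongr; exact hup S hAS
        _ = 6 * c' / π := by rw [hωS]; field_simp; ring
    have hhead : c / 2 * log (S / A) ≤ ∫ t in 0..S, K t * cos (ω * t) := by
      have := mul_log_le_intervalIntegral hA hAS
        (hKS.mono_set (uIcc_subset_uIcc_right (mem_uIcc_of_le hA.le hAS))) hlow
      linarith [half_intervalIntegral_le_intervalIntegral_mul_cos hA hAS hω.le hωS.le hKS hKnn]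
    have hSA : S / A = π / (3 * A) * ω⁻¹ := by simp only [S]; field_simp
    rw [hSA] at hhead
    linarith [(abs_le.1 htail).1]
  have hlim : Tendsto (fun ω => c / 2 * log (π / (3 * A) * ω⁻¹) - 6 * c' / π) (𝓝[>] 0) atTop :=
    (tendsto_atTop_add_const_right _ (-(6 * c' / π)) ((tendsto_log_atTop.comp
      (tendsto_inv_nhdsGT_zero.const_mul_atTop (by positivity))).const_mul_atTop
      (half_pos hc))).congr fun ω => (sub_eq_add_neg _ _).symm
  exact tendsto_atTop_mono' _ (mem_of_superset (Ioo_mem_nhdsGT (by positivity)) hbound) hlim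

end CosineTransform

lemma integrableOn_Ioi_of_tendsto_of_isBigO_rpow {f : ℝ → ℝ} {a b s : ℝ}
    (hf : ContinuousOn f (Ioi a)) (ha : Tendsto f (𝓝[>] a) (𝓝 b)) (hs : s < -1)
    (hO : f =O[atTop] fun x => x ^ s) : IntegrableOn f (Ioi a) := by
  have hmeas := hf.aestronglyMeasurable (μ := volume) measurableSet_Ioi
  exact integrableOn_Ioi_iff_integrableAtFilter_atTop_nhdsWithin.2
    ⟨hO.integrableAtFilter ⟨Ioi a, Ioi_mem_atTop a, hmeas⟩ (integrableAtFilter_rpow_atTop_iff.2 hs),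
      ha.integrableAtFilter ⟨Ioi a, self_mem_nhdsWithin, hmeas⟩ (volume.finiteAt_nhdsWithin _ _),
      hf.locallyIntegrableOn measurableSet_Ioi⟩

/-- The paper's `r̂`, with `Kc`, `Ks` standing for `K_cos`, `K_sin`. -/
noncomputable def spectralDensity (m β : ℝ) (Kc Ks : ℝ → ℝ) (ω : ℝ) : ℝ :=
  1 / (2 * π) * (2 * β * Kc ω) / ((β * Kc ω) ^ 2 + (m * ω - β * Ks ω) ^ 2)

section SpectralDensity

variable {m β B ω : ℝ} {Kc Ks : ℝ → ℝ}

lemma spectralDensity_nonneg (hβ : 0 ≤ β) (hKc : 0 ≤ Kc ω) :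
    0 ≤ spectralDensity m β Kc Ks ω := by
  unfold spectralDensity
  positivity

lemma spectralDensity_le_inv (hβ : 0 < β) (hKc : 0 < Kc ω) :
    spectralDensity m β Kc Ks ω ≤ 1 / (π * β * Kc ω) := by
  unfold spectralDensity
  calc _ ≤ 1 / (2 * π) * (2 * β * Kc ω) / (β * Kc ω) ^ 2 :=
        div_le_div_of_nonneg_left (by positivity) (by positivity)
          (le_add_of_nonneg_right (sq_nonneg _))
    _ = 1 / (π * β * Kc ω) := by field_simp

lemma abs_spectralDensity_le (hm : 0 < m) (hβ : 0 ≤ β) (hω : 0 < ω) (hKc : |Kc ω| ≤ B)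
    (hKs : |Ks ω| ≤ B) (hωB : 2 * β * B ≤ m * ω) :
    |spectralDensity m β Kc Ks ω| ≤ 4 * β * B / (π * m ^ 2) / ω ^ 2 := by
  have hden : (m * ω / 2) ^ 2 ≤ (β * Kc ω) ^ 2 + (m * ω - β * Ks ω) ^ 2 := by
    have : β * Ks ω ≤ β * B := mul_le_mul_of_nonneg_left ((le_abs_self _).trans hKs) hβ
    have := pow_le_pow_left₀ (by positivity) (by linarith : m * ω / 2 ≤ m * ω - β * Ks ω) 2
    linarith [sq_nonneg (β * Kc ω)]
  have hnum : |1 / (2 * π) * (2 * β * Kc ω)| ≤ β * B / π := by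
    rw [abs_mul, abs_mul, abs_of_pos (by positivity : 0 < 1 / (2 * π)),
      abs_of_nonneg (by positivity : 0 ≤ 2 * β)]
    calc 1 / (2 * π) * (2 * β * |Kc ω|) ≤ 1 / (2 * π) * (2 * β * B) := by gcongr
      _ = β * B / π := by field_simp
  unfold spectralDensity
  rw [abs_div, abs_of_nonneg ((sq_nonneg _).trans hden)]
  calc _ ≤ β * B / π / (m * ω / 2) ^ 2 :=
        div_le_div₀ ((abs_nonneg _).trans hnum) hnum (by positivity) hden
    _ = 4 * β * B / (π * m ^ 2) / ω ^ 2 := by field_simp; ring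

lemma continuousOn_spectralDensity {s : Set ℝ} (hβ : 0 < β) (hKc : ContinuousOn Kc s)
    (hKs : ContinuousOn Ks s) (hpos : ∀ ω ∈ s, 0 < Kc ω) :
    ContinuousOn (spectralDensity m β Kc Ks) s :=
  (continuousOn_const.mul (continuousOn_const.mul hKc)).div
    (((continuousOn_const.mul hKc).pow 2).add
      (((continuousOn_const.mul continuousOn_id).sub (continuousOn_const.mul hKs)).pow 2))
    fun ω hω => (add_pos_of_pos_of_nonneg (pow_pos (mul_pos hβ (hpos ω hω)) 2)
      (sq_nonneg _)).ne'

lemma tendsto_spectralDensity_zero {l : Filter ℝ} (hβ : 0 < β) (hKc : Tendsto Kc l atTop) :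
    Tendsto (spectralDensity m β Kc Ks) l (𝓝 0) := by
  have hpos : ∀ᶠ ω in l, 0 < Kc ω := hKc.eventually_gt_atTop 0
  refine tendsto_of_tendsto_of_tendsto_of_le_of_le' tendsto_const_nhds ?_
    (hpos.mono fun ω h => spectralDensity_nonneg hβ.le h.le)
    (hpos.mono fun ω h => spectralDensity_le_inv hβ h)
  exact (hKc.const_mul_atTop (by positivity : 0 < π * β)).inv_tendsto_atTop.congr fun ω =>
    (one_div _).symm

lemma isBigO_spectralDensity_atTop (hm : 0 < m) (hβ : 0 ≤ β) (hKc : ∀ᶠ ω in atTop, |Kc ω| ≤ B)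
    (hKs : ∀ᶠ ω in atTop, |Ks ω| ≤ B) :
    spectralDensity m β Kc Ks =O[atTop] fun ω => ω ^ (-2 : ℝ) := by
  refine Asymptotics.IsBigO.of_bound (4 * β * B / (π * m ^ 2)) ?_
  filter_upwards [hKc, hKs, eventually_gt_atTop 0, eventually_ge_atTop (2 * β * B / m)]
    with ω hc hs hω hωB
  rw [Real.norm_eq_abs, Real.norm_eq_abs, abs_of_pos (rpow_pos_of_pos hω _), rpow_neg hω.le,
    rpow_two, ← div_eq_mul_inv]
  exact abs_spectralDensity_le hm hβ hω hc hs ((div_le_iff₀' hm).1 hωB)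

end SpectralDensity

theorem stmt_17 (K : ℝ → ℝ) (C₁ m β : ℝ) (hC₁ : 0 < C₁) (hm : 0 < m) (hβ : 0 < β)
    (hloc : LocallyIntegrableOn K (Ioi 0))
    (hint0 : IntegrableOn K (Ioc 0 1))
    (hpos : ∀ t ∈ Ioi (0:ℝ), 0 < K t)
    (hK0 : Tendsto K atTop (nhds 0))
    (hdec : ∃ A > (0:ℝ), AntitoneOn K (Ici A))
    (htK : Tendsto (fun t => t * K t) atTop (nhds C₁))
    (Kcos Ksin : ℝ → ℝ)
    (hKcos : ∀ ω > (0:ℝ),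
      Tendsto (fun T => ∫ t in (0:ℝ)..T, K t * Real.cos (ω * t)) atTop (nhds (Kcos ω)))
    (hKsin : ∀ ω > (0:ℝ),
      Tendsto (fun T => ∫ t in (0:ℝ)..T, K t * Real.sin (ω * t)) atTop (nhds (Ksin ω)))
    (hKcospos : ∀ ω > (0:ℝ), 0 < Kcos ω)
    (r : ℝ → ℝ)
    (hr : ∀ ω : ℝ, r ω = (1 / (2 * π)) * (2 * β * Kcos ω) /
        ((β * Kcos ω) ^ 2 + (m * ω - β * Ksin ω) ^ 2)) :
    ContinuousOn r (Ioi 0) ∧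
    Tendsto r (nhdsWithin 0 (Ioi 0)) (nhds 0) ∧
    Tendsto r atTop (nhds 0) ∧
    IntegrableOn r (Ioi 0) := by
  obtain rfl : r = spectralDensity m β Kcos Ksin := funext hr
  obtain ⟨A₀, -, hanti₀⟩ := hdec
  obtain ⟨A, hA, hanti, hlow, hup⟩ := hanti₀.exists_antitoneOn_mul_mem_Icc hC₁ htK
  have hKA : IntervalIntegrable K volume 0 A :=
    intervalIntegrable_of_integrableOn_Ioc_zero_one hint0 hloc (by linarith)
  have hKnn : ∀ t ∈ Ioi 0, 0 ≤ K t := fun t ht => (hpos t ht).le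
  have hKnnA : ∀ t ≥ A, 0 ≤ K t := fun t ht => hKnn t (one_pos.trans_le (hA.trans ht))
  have hcont : ContinuousOn (spectralDensity m β Kcos Ksin) (Ioi 0) :=
    continuousOn_spectralDensity hβ
      (continuousOn_of_tendsto_intervalIntegral_mul_comp_mul hKA hanti hK0 continuous_cos
        abs_cos_le_one abs_intervalIntegral_cos_le hKcos)
      (continuousOn_of_tendsto_intervalIntegral_mul_comp_mul hKA hanti hK0 continuous_sin
        abs_sin_le_one abs_intervalIntegral_sin_le hKsin) hKcospos
  have hzero : Tendsto (spectralDensity m β Kcos Ksin) (𝓝[>] 0) (𝓝 0) :=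
    tendsto_spectralDensity_zero hβ
      (tendsto_nhdsGT_zero_atTop_of_tendsto_intervalIntegral_mul_cos (by linarith) hKA hKnn hanti
        (half_pos hC₁) hlow hup hKcos)
  obtain ⟨Bc, hBc⟩ := exists_eventually_abs_le_of_tendsto_intervalIntegral_mul_comp_mul
    (by linarith) hKA hanti hKnnA continuous_cos abs_cos_le_one abs_intervalIntegral_cos_le hKcos
  obtain ⟨Bs, hBs⟩ := exists_eventually_abs_le_of_tendsto_intervalIntegral_mul_comp_mul
    (by linarith) hKA hanti hKnnA continuous_sin abs_sin_le_one abs_intervalIntegral_sin_le hKsin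
  have hO := isBigO_spectralDensity_atTop hm hβ.le (B := max Bc Bs)
    (hBc.mono fun _ h => h.trans (le_max_left _ _)) (hBs.mono fun _ h => h.trans (le_max_right _ _))
  exact ⟨hcont, hzero, hO.trans_tendsto (tendsto_rpow_neg_atTop two_pos),
    integrableOn_Ioi_of_tendsto_of_isBigO_rpow hcont hzero (by norm_num) hO⟩
end

section
/- Let r̂ : (0,∞) → [0,∞) be bounded and suppose log(t)·r̂(z/t) → L ∈ (0,∞) as t → ∞ for each fixed z > 0, with the uniform bound log(t)·r̂(z/t) ≤ C for all z ∈ (0, √t] and all large t. Then log(t)/t · ∫₀^∞ 4(1 − cos(tω))/ω² · r̂(ω) dω → 4L ∫₀^∞ (1 − cos z)/z² dz = 2πL as t → ∞. -/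
/-!
Substituting `z = t ω` turns `log t / t * ∫ 4 (1 - cos (t ω)) / ω² r(ω) dω` into
`∫ log t · r(z/t) · 4 (1 - cos z) / z² dz`. On the window `z ≤ √t` the factor `log t · r(z/t)`
is bounded by `C` and tends to `L`, so dominated convergence against the integrable kernel
`4 (1 - cos z) / z²` gives `4 L ∫ (1 - cos z) / z² = 2 π L`. On `z > √t` boundedness of `r`
bounds the integral by `8 B log t / √t → 0`.
-/

open MeasureTheory Filter Set Real

lemma hasDerivAt_antideriv_mul_exp_neg_mul_one_sub_cos (s x : ℝ) :
    HasDerivAt (fun x => exp (-(s * x)) * ((s ^ 2 * cos x - s * sin x) / (1 + s ^ 2) - 1))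
      (s * exp (-(s * x)) * (1 - cos x)) x := by
  have hexp : HasDerivAt (fun x => exp (-(s * x))) (-s * exp (-(s * x))) x := by
    simpa [mul_comm] using ((hasDerivAt_id x).const_mul s).neg.exp
  have htrig := (((hasDerivAt_cos x).const_mul (s ^ 2)).fun_sub
    ((hasDerivAt_sin x).const_mul s)).div_const (1 + s ^ 2) |>.sub_const 1
  refine (hexp.mul htrig).congr_deriv ?_
  field_simp
  ring

lemma tendsto_antideriv_mul_exp_neg_mul_one_sub_cos {s : ℝ} (hs : 0 < s) :
    Tendsto (fun x => exp (-(s * x)) * ((s ^ 2 * cos x - s * sin x) / (1 + s ^ 2) - 1))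
      atTop (nhds 0) := by
  refine Tendsto.zero_mul_isBoundedUnder_le
    (tendsto_exp_neg_atTop_nhds_zero.comp (tendsto_id.const_mul_atTop hs)) ?_
  refine isBoundedUnder_of ⟨(s ^ 2 + s) / (1 + s ^ 2) + 1, fun x => ?_⟩
  have : |s ^ 2 * cos x - s * sin x| ≤ s ^ 2 + s := by
    calc |s ^ 2 * cos x - s * sin x| ≤ s ^ 2 * |cos x| + s * |sin x| := by
          refine (abs_sub _ _).trans ?_
          rw [abs_mul, abs_mul, abs_of_nonneg (sq_nonneg s), abs_of_pos hs]
      _ ≤ s ^ 2 * 1 + s * 1 := by gcongr <;> [exact abs_cos_le_one x; exact abs_sin_le_one x]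
      _ = s ^ 2 + s := by ring
  simp only [Function.comp_apply, norm_eq_abs]
  refine (abs_sub _ _).trans ?_
  rw [abs_div, abs_of_pos (by positivity : (0:ℝ) < 1 + s ^ 2), abs_one]
  gcongr

lemma integrableOn_mul_exp_neg_mul_one_sub_cos {s : ℝ} (hs : 0 < s) :
    IntegrableOn (fun x => s * exp (-(s * x)) * (1 - cos x)) (Ioi 0) :=
  integrableOn_Ioi_deriv_of_nonneg'
    (fun x _ => hasDerivAt_antideriv_mul_exp_neg_mul_one_sub_cos s x)
    (fun x _ => by have := cos_le_one x; positivity)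
    (tendsto_antideriv_mul_exp_neg_mul_one_sub_cos hs)

lemma integral_mul_exp_neg_mul_one_sub_cos {s : ℝ} (hs : 0 < s) :
    ∫ x in Ioi 0, s * exp (-(s * x)) * (1 - cos x) = (1 + s ^ 2)⁻¹ := by
  rw [integral_Ioi_of_hasDerivAt_of_tendsto'
    (fun x _ => hasDerivAt_antideriv_mul_exp_neg_mul_one_sub_cos s x)
    (integrableOn_mul_exp_neg_mul_one_sub_cos hs)
    (tendsto_antideriv_mul_exp_neg_mul_one_sub_cos hs)]
  simp only [mul_zero, neg_zero, exp_zero, cos_zero, sin_zero, one_mul, sub_zero, mul_one,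
    zero_sub]
  field_simp
  ring

lemma integral_mul_exp_neg_mul {x : ℝ} (hx : 0 < x) :
    ∫ s in Ioi 0, s * exp (-(s * x)) = (x ^ 2)⁻¹ := by
  have := integral_rpow_mul_exp_neg_mul_Ioi two_pos hx
  norm_num at this
  simpa [mul_comm] using this

lemma one_sub_cos_div_sq_nonneg (x : ℝ) : 0 ≤ (1 - cos x) / x ^ 2 :=
  div_nonneg (sub_nonneg.2 (cos_le_one x)) (sq_nonneg x)

lemma one_sub_cos_div_sq_le (x : ℝ) : (1 - cos x) / x ^ 2 ≤ 2 / x ^ 2 := by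
  gcongr
  linarith [neg_one_le_cos x]

-- `x⁻² = ∫ s e^{-sx} ds`; swapping the order of integration leaves `∫ (1 + s²)⁻¹ ds`.
lemma integral_one_sub_cos_div_sq : ∫ x in Ioi 0, (1 - cos x) / x ^ 2 = π / 2 := by
  set μ := volume.restrict (Ioi (0:ℝ))
  set f : ℝ → ℝ → ℝ := fun s x => s * exp (-(s * x)) * (1 - cos x)
  have hf_nonneg : ∀ s ∈ Ioi (0:ℝ), ∀ x, 0 ≤ f s x := fun s hs x => by
    have := cos_le_one x; have : (0:ℝ) < s := hs; positivity
  have hf_cont : Continuous (Function.uncurry f) := by fun_prop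
  have hf_int : Integrable (Function.uncurry f) (μ.prod μ) := by
    refine (integrable_prod_iff hf_cont.aestronglyMeasurable).2 ⟨?_, ?_⟩
    · exact (ae_restrict_iff' measurableSet_Ioi).2
        (ae_of_all _ fun s hs => integrableOn_mul_exp_neg_mul_one_sub_cos hs)
    · refine integrable_inv_one_add_sq.integrableOn.congr_fun (fun s hs => ?_) measurableSet_Ioi
      dsimp only
      rw [← integral_mul_exp_neg_mul_one_sub_cos hs]
      exact setIntegral_congr_fun measurableSet_Ioi fun x _ =>
        (Real.norm_of_nonneg (hf_nonneg s hs x)).symm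
  calc ∫ x in Ioi 0, (1 - cos x) / x ^ 2
      = ∫ x, ∫ s, f s x ∂μ ∂μ := setIntegral_congr_fun measurableSet_Ioi fun x hx => by
        simp only [f, μ, integral_mul_const, integral_mul_exp_neg_mul hx, div_eq_inv_mul]
    _ = ∫ s, ∫ x, f s x ∂μ ∂μ := (integral_integral_swap hf_int).symm
    _ = ∫ s in Ioi 0, (1 + s ^ 2)⁻¹ :=
        setIntegral_congr_fun measurableSet_Ioi fun s hs => integral_mul_exp_neg_mul_one_sub_cos hs
    _ = π / 2 := by simp [integral_Ioi_inv_one_add_sq]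

lemma integrableOn_one_sub_cos_div_sq : IntegrableOn (fun x => (1 - cos x) / x ^ 2) (Ioi 0) := by
  have hmeas : AEStronglyMeasurable (fun x : ℝ => (1 - cos x) / x ^ 2) :=
    (by fun_prop : Measurable fun x : ℝ => (1 - cos x) / x ^ 2).aestronglyMeasurable
  rw [← Ioc_union_Ioi_eq_Ioi zero_le_one]
  refine IntegrableOn.union ?_ ?_
  · refine Measure.integrableOn_of_bounded (M := 1 / 2) measure_Ioc_lt_top.ne hmeas
      ((ae_restrict_iff' measurableSet_Ioc).2 (ae_of_all _ fun x hx => ?_))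
    have := one_sub_sq_div_two_le_cos (x := x)
    rw [norm_of_nonneg (one_sub_cos_div_sq_nonneg x), div_le_iff₀ (pow_pos hx.1 2)]
    linarith
  · refine ((integrableOn_Ioi_rpow_of_lt (by norm_num : (-2:ℝ) < -1) one_pos).const_mul 2).mono'
      hmeas.restrict ((ae_restrict_iff' measurableSet_Ioi).2 (ae_of_all _ fun x hx => ?_))
    have hx : (0:ℝ) < x := zero_lt_one.trans hx
    rw [norm_of_nonneg (one_sub_cos_div_sq_nonneg x), rpow_neg hx.le, rpow_two,
      ← div_eq_mul_inv]
    exact one_sub_cos_div_sq_le x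

lemma norm_setIntegral_Ioi_le_of_norm_le_mul_inv_sq {E : Type*} [NormedAddCommGroup E]
    [NormedSpace ℝ E] {f : ℝ → E} {a M : ℝ} (ha : 0 < a)
    (hf : ∀ z ∈ Ioi a, ‖f z‖ ≤ M * (z ^ 2)⁻¹) : ‖∫ z in Ioi a, f z‖ ≤ M / a := by
  have hpow : ∀ z ∈ Ioi a, z ^ (-2:ℝ) = (z ^ 2)⁻¹ := fun z hz => by
    rw [rpow_neg (ha.trans hz).le, rpow_two]
  calc ‖∫ z in Ioi a, f z‖ ≤ ∫ z in Ioi a, M * z ^ (-2:ℝ) :=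
        norm_integral_le_of_norm_le
          ((integrableOn_Ioi_rpow_of_lt (by norm_num) ha).const_mul M)
          ((ae_restrict_iff' measurableSet_Ioi).2 (ae_of_all _ fun z hz => hpow z hz ▸ hf z hz))
    _ = M / a := by
        rw [integral_const_mul, integral_Ioi_rpow_of_lt (by norm_num) ha]
        norm_num [rpow_neg_one, div_eq_mul_inv]

lemma tendsto_setIntegral_Ioi_of_dominated_of_tail {ι : Type*} {l : Filter ι}
    [l.IsCountablyGenerated] {F : ι → ℝ → ℝ} {f bound : ℝ → ℝ} {a : ι → ℝ} {c : ℝ}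
    (ha : Tendsto a l atTop) (hF_int : ∀ᶠ i in l, IntegrableOn (F i) (Ioi c))
    (h_bound : ∀ᶠ i in l, ∀ z ∈ Ioc c (a i), ‖F i z‖ ≤ bound z)
    (bound_int : IntegrableOn bound (Ioi c))
    (h_lim : ∀ z ∈ Ioi c, Tendsto (fun i => F i z) l (nhds (f z)))
    (h_tail : Tendsto (fun i => ∫ z in Ioi (a i), F i z) l (nhds 0)) :
    Tendsto (fun i => ∫ z in Ioi c, F i z) l (nhds (∫ z in Ioi c, f z)) := by
  have h_window : Tendsto (fun i => ∫ z in Ioi c, (Ioc c (a i)).indicator (F i) z) l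
      (nhds (∫ z in Ioi c, f z)) := by
    refine tendsto_integral_filter_of_dominated_convergence (fun z => ‖bound z‖)
      (hF_int.mono fun i hi => hi.aestronglyMeasurable.indicator measurableSet_Ioc)
      (h_bound.mono fun i hi => ae_of_all _ fun z => ?_) bound_int.norm
      ((ae_restrict_iff' measurableSet_Ioi).2 (ae_of_all _ fun z hz => ?_))
    · by_cases hz : z ∈ Ioc c (a i)
      · simpa [indicator_of_mem hz] using (hi z hz).trans (le_abs_self _)
      · simp [indicator_of_notMem hz]
    · refine (h_lim z hz).congr' ((ha.eventually_ge_atTop z).mono fun i hi => ?_)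
      exact (indicator_of_mem (show z ∈ Ioc c (a i) from ⟨hz, hi⟩) _).symm
  have h_sum := h_window.add h_tail
  rw [add_zero] at h_sum
  refine h_sum.congr' ?_
  filter_upwards [hF_int, ha.eventually_ge_atTop c] with i hi hac
  rw [setIntegral_indicator measurableSet_Ioc, inter_eq_self_of_subset_right Ioc_subset_Ioi_self,
    ← setIntegral_union (Ioc_disjoint_Ioi le_rfl) measurableSet_Ioi
      (hi.mono_set Ioc_subset_Ioi_self) (hi.mono_set (Ioi_subset_Ioi hac)),
    Ioc_union_Ioi_eq_Ioi hac]

lemma integral_Ioi_one_sub_cos_mul_div_sq_mul_eq_mul_integral_comp_div (g : ℝ → ℝ) {t : ℝ}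
    (ht : 0 < t) :
    ∫ ω in Ioi 0, 4 * (1 - cos (t * ω)) / ω ^ 2 * g ω
      = t * ∫ z in Ioi 0, g (z / t) * (4 * ((1 - cos z) / z ^ 2)) := by
  have h := integral_comp_mul_left_Ioi (fun ω => 4 * (1 - cos (t * ω)) / ω ^ 2 * g ω) 0
    (inv_pos.2 ht)
  have hscale : ∀ z, 4 * (1 - cos (t * (t⁻¹ * z))) / (t⁻¹ * z) ^ 2 * g (t⁻¹ * z)
      = t ^ 2 * (g (z / t) * (4 * ((1 - cos z) / z ^ 2))) := fun z => by
    rw [← mul_assoc, mul_inv_cancel₀ ht.ne', one_mul, inv_mul_eq_div]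
    field_simp
  simp only [hscale, integral_const_mul, mul_zero, inv_inv, smul_eq_mul] at h
  apply mul_left_cancel₀ ht.ne'
  rw [← h]
  ring

section BoundedProfile

variable {g : ℝ → ℝ} {B : ℝ}

lemma integrableOn_log_mul_comp_div_mul_one_sub_cos_div_sq (hg_meas : Measurable g)
    (hg : ∀ ω ∈ Ioi (0:ℝ), |g ω| ≤ B) {t : ℝ} (ht : 0 < t) :
    IntegrableOn (fun z => log t * g (z / t) * (4 * ((1 - cos z) / z ^ 2))) (Ioi 0) :=
  (integrableOn_one_sub_cos_div_sq.const_mul 4).bdd_mul (c := |log t| * B)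
    (by fun_prop : Measurable fun z => log t * g (z / t)).aestronglyMeasurable
    ((ae_restrict_iff' measurableSet_Ioi).2 (ae_of_all _ fun z hz => by
      rw [norm_mul, norm_eq_abs, norm_eq_abs]
      exact mul_le_mul_of_nonneg_left (hg _ (div_pos hz ht)) (abs_nonneg _)))

lemma tendsto_setIntegral_Ioi_sqrt_log_mul_comp_div (hg : ∀ ω ∈ Ioi (0:ℝ), |g ω| ≤ B) :
    Tendsto (fun t => ∫ z in Ioi √t, log t * g (z / t) * (4 * ((1 - cos z) / z ^ 2)))
      atTop (nhds 0) := by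
  have h_log_sqrt : Tendsto (fun t => 8 * B * log t / √t) atTop (nhds 0) := by
    have := (isLittleO_log_rpow_atTop (half_pos one_pos)).tendsto_div_nhds_zero.const_mul (8 * B)
    simpa [sqrt_eq_rpow, mul_div_assoc] using this
  refine squeeze_zero_norm' ?_ h_log_sqrt
  filter_upwards [eventually_ge_atTop 1] with t ht
  refine norm_setIntegral_Ioi_le_of_norm_le_mul_inv_sq (sqrt_pos.2 (by linarith)) fun z hz => ?_
  have hz : 0 < z := (sqrt_nonneg t).trans_lt hz
  have h_cos : |4 * ((1 - cos z) / z ^ 2)| ≤ 8 * (z ^ 2)⁻¹ := by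
    rw [abs_of_nonneg (by linarith [one_sub_cos_div_sq_nonneg z])]
    linarith [one_sub_cos_div_sq_le z, div_eq_mul_inv 2 (z ^ 2)]
  have h_log := log_nonneg ht
  have h_g := hg (z / t) (div_pos hz (by linarith))
  rw [norm_eq_abs, abs_mul, abs_mul, abs_of_nonneg h_log]
  calc log t * |g (z / t)| * |4 * ((1 - cos z) / z ^ 2)| ≤ log t * B * (8 * (z ^ 2)⁻¹) :=
        mul_le_mul (mul_le_mul_of_nonneg_left h_g h_log) h_cos (abs_nonneg _)
          (mul_nonneg h_log ((abs_nonneg _).trans h_g))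
    _ = 8 * B * log t * (z ^ 2)⁻¹ := by ring

end BoundedProfile

theorem stmt_18_general (r : ℝ → ℝ) (L : ℝ)
    (hmeas : Measurable r)
    (hnonneg : ∀ ω ∈ Ioi (0:ℝ), 0 ≤ r ω)
    (hbdd : ∃ B : ℝ, ∀ ω ∈ Ioi (0:ℝ), r ω ≤ B)
    (hptwise : ∀ z > (0:ℝ),
      Tendsto (fun t => Real.log t * r (z / t)) atTop (nhds L))
    (hunif : ∃ C T₀ : ℝ, ∀ t ≥ T₀, ∀ z : ℝ, 0 < z → z ≤ Real.sqrt t →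
      Real.log t * r (z / t) ≤ C) :
    Tendsto (fun t => Real.log t / t *
        ∫ ω in Ioi (0:ℝ), 4 * (1 - Real.cos (t * ω)) / ω ^ 2 * r ω)
      atTop (nhds (2 * π * L)) := by
  obtain ⟨B, hB⟩ := hbdd
  obtain ⟨C, T₀, hC⟩ := hunif
  have hr : ∀ ω ∈ Ioi (0:ℝ), |r ω| ≤ B := fun ω hω =>
    (abs_of_nonneg (hnonneg ω hω)).trans_le (hB ω hω)
  have hK_nonneg : ∀ z, 0 ≤ 4 * ((1 - cos z) / z ^ 2) := fun z =>
    mul_nonneg zero_le_four (one_sub_cos_div_sq_nonneg z)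
  have h_window : ∀ᶠ t in atTop, ∀ z ∈ Ioc 0 √t,
      ‖log t * r (z / t) * (4 * ((1 - cos z) / z ^ 2))‖ ≤ C * (4 * ((1 - cos z) / z ^ 2)) := by
    filter_upwards [eventually_ge_atTop T₀, eventually_ge_atTop 1] with t hT₀ ht z hz
    have h_nonneg : 0 ≤ log t * r (z / t) :=
      mul_nonneg (log_nonneg ht) (hnonneg _ (div_pos hz.1 (by linarith)))
    rw [norm_of_nonneg (mul_nonneg h_nonneg (hK_nonneg z))]
    exact mul_le_mul_of_nonneg_right (hC t hT₀ z hz.1 hz.2) (hK_nonneg z)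
  have hlim := tendsto_setIntegral_Ioi_of_dominated_of_tail tendsto_sqrt_atTop
    ((eventually_gt_atTop 0).mono fun t ht =>
      integrableOn_log_mul_comp_div_mul_one_sub_cos_div_sq hmeas hr ht)
    h_window ((integrableOn_one_sub_cos_div_sq.const_mul 4).const_mul C)
    (fun z hz => (hptwise z hz).mul_const _) (tendsto_setIntegral_Ioi_sqrt_log_mul_comp_div hr)
  rw [integral_const_mul, integral_const_mul, integral_one_sub_cos_div_sq,
    show L * (4 * (π / 2)) = 2 * π * L by ring] at hlim
  refine hlim.congr' ((eventually_gt_atTop 0).mono fun t ht => ?_)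
  dsimp only
  rw [integral_Ioi_one_sub_cos_mul_div_sq_mul_eq_mul_integral_comp_div r ht, ← mul_assoc,
    div_mul_cancel₀ _ ht.ne', ← integral_const_mul]
  simp only [mul_assoc]

theorem stmt_18 (r : ℝ → ℝ) (L : ℝ) (hL : 0 < L)
    (hmeas : Measurable r)
    (hnonneg : ∀ ω ∈ Ioi (0:ℝ), 0 ≤ r ω)
    (hbdd : ∃ B : ℝ, ∀ ω ∈ Ioi (0:ℝ), r ω ≤ B)
    (hptwise : ∀ z > (0:ℝ),
      Tendsto (fun t => Real.log t * r (z / t)) atTop (nhds L))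
    (hunif : ∃ C T₀ : ℝ, ∀ t ≥ T₀, ∀ z : ℝ, 0 < z → z ≤ Real.sqrt t →
      Real.log t * r (z / t) ≤ C) :
    Tendsto (fun t => Real.log t / t *
        ∫ ω in Ioi (0:ℝ), 4 * (1 - Real.cos (t * ω)) / ω ^ 2 * r ω)
      atTop (nhds (2 * π * L)) :=
  stmt_18_general r L hmeas hnonneg hbdd hptwise hunif
end
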